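/- Let A, B, X be bounded operators on a complex Hilbert space with A, B positive. For all r ≥ 2 and 0 ≤ α ≤ 1: w(A^α X B^{1−α})^r ≤ ‖X‖^r · ‖ α A^r + (1−α) B^r ‖. -/

import Mathlib

open scoped ComplexConjugate

variable {H : Type*} [NormedAddCommGroup H] [InnerProductSpace ℂ H] [CompleteSpace H]

/-- The numerical radius of a bounded operator. -/
noncomputable def numRadius (A : H →L[ℂ] H) : ℝ :=
  sSup {t : ℝ | ∃ x : H, ‖x‖ = 1 ∧ t = ‖(inner ℂ (A x) x : ℂ)‖}

/-!
For a unit vector `x`, Cauchy–Schwarz gives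
`|⟪A^α X B^(1-α) x, x⟫| ≤ ‖X‖ ‖B^(1-α) x‖ ‖A^α x‖`. Writing `‖A^α x‖² = ⟪(A^r)^(2α/r) x, x⟫` with
`2α/r ≤ 1`, the Hölder–McCarthy inequality `⟪T^s x, x⟫ ≤ ⟪T x, x⟫^s` (`0 ≤ s ≤ 1`, `T ≥ 0`) bounds
`‖A^α x‖` by `⟪A^r x, x⟫^(α/r)`, and likewise for `B`. The weighted AM–GM inequality then bounds
the product by `⟪(α A^r + (1-α) B^r) x, x⟫^(1/r) ≤ ‖α A^r + (1-α) B^r‖^(1/r)`.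
The Hölder–McCarthy inequality itself comes from applying the functional calculus to the tangent
line bound `t^s ≤ (1-s) ε^s + s ε^(s-1) t` of the concave function `t ↦ t^s` and taking `ε`
equal to `⟪T x, x⟫`.
-/

open scoped InnerProductSpace
open RCLike

lemma Real.rpow_le_tangent {s t ε : ℝ} (hs0 : 0 ≤ s) (hs1 : s ≤ 1) (ht : 0 ≤ t) (hε : 0 < ε) :
    t ^ s ≤ (1 - s) * ε ^ s + s * ε ^ (s - 1) * t := by
  have h := Real.geom_mean_le_arith_mean2_weighted hs0 (by linarith : (0 : ℝ) ≤ 1 - s)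
    (div_nonneg ht hε.le) zero_le_one (by ring)
  rw [Real.one_rpow, mul_one, Real.div_rpow ht hε.le, div_le_iff₀ (by positivity)] at h
  calc t ^ s ≤ (s * (t / ε) + (1 - s) * 1) * ε ^ s := h
    _ = (1 - s) * ε ^ s + s * ε ^ (s - 1) * t := by
        rw [Real.rpow_sub hε, Real.rpow_one]; field_simp; ring

lemma Real.le_rpow_of_forall_le_tangent {s y c : ℝ} (hs : 0 ≤ s) (hc : 0 ≤ c)
    (h : ∀ ε > 0, y ≤ (1 - s) * ε ^ s + s * ε ^ (s - 1) * c) : y ≤ c ^ s := by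
  rcases hc.eq_or_lt with rfl | hc
  · rcases hs.eq_or_lt with rfl | hs
    · simpa using h 1 one_pos
    rw [Real.zero_rpow hs.ne']
    refine le_of_forall_pos_le_add fun δ hδ => ?_
    have h := h (δ ^ s⁻¹) (by positivity)
    rw [Real.rpow_inv_rpow hδ.le hs.ne'] at h
    nlinarith
  · calc y ≤ (1 - s) * c ^ s + s * c ^ (s - 1) * c := h c hc
      _ = c ^ s := by rw [Real.rpow_sub hc, Real.rpow_one]; field_simp; ring

lemma CFC.rpow_le_tangent {𝒜 : Type*} [CStarAlgebra 𝒜] [PartialOrder 𝒜] [StarOrderedRing 𝒜]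
    {a : 𝒜} (ha : 0 ≤ a) {s ε : ℝ} (hs0 : 0 ≤ s) (hs1 : s ≤ 1) (hε : 0 < ε) :
    a ^ s ≤ algebraMap ℝ 𝒜 ((1 - s) * ε ^ s) + (s * ε ^ (s - 1)) • a := by
  rw [CFC.rpow_eq_cfc_real ha]
  calc cfc (fun t : ℝ => t ^ s) a ≤ cfc (fun t => (1 - s) * ε ^ s + s * ε ^ (s - 1) * t) a :=
        cfc_mono (fun t ht => Real.rpow_le_tangent hs0 hs1 (spectrum_nonneg_of_nonneg ha ht) hε)
          ((Real.continuous_rpow_const hs0).continuousOn)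
    _ = _ := by rw [cfc_const_add _ _ a, cfc_const_mul_id _ a]

namespace ContinuousLinearMap

lemma re_inner_nonneg_left_of_nonneg {𝕜 E : Type*} [RCLike 𝕜] [NormedAddCommGroup E]
    [InnerProductSpace 𝕜 E] {T : E →L[𝕜] E} (hT : 0 ≤ T) (x : E) : 0 ≤ re ⟪T x, x⟫_𝕜 :=
  ((nonneg_iff_isPositive T).mp hT).re_inner_nonneg_left x

lemma re_inner_apply_le_of_le {𝕜 E : Type*} [RCLike 𝕜] [NormedAddCommGroup E]
    [InnerProductSpace 𝕜 E] {S T : E →L[𝕜] E} (h : S ≤ T) (x : E) :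
    re ⟪S x, x⟫_𝕜 ≤ re ⟪T x, x⟫_𝕜 := by
  have := ((le_def S T).mp h).re_inner_nonneg_left x
  rwa [sub_apply, inner_sub_left, map_sub, sub_nonneg] at this

omit [CompleteSpace H] in
lemma re_inner_algebraMap_add_smul_apply (c d : ℝ) (T : H →L[ℂ] H) (x : H) :
    re ⟪(algebraMap ℝ (H →L[ℂ] H) c + d • T) x, x⟫_ℂ = c * ‖x‖ ^ 2 + d * re ⟪T x, x⟫_ℂ := by
  simp [Algebra.algebraMap_eq_smul_one, ← Complex.ofReal_pow]

theorem re_inner_rpow_apply_le {T : H →L[ℂ] H} (hT : 0 ≤ T) {s : ℝ}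
    (hs0 : 0 ≤ s) (hs1 : s ≤ 1) {x : H} (hx : ‖x‖ = 1) :
    re ⟪(T ^ s) x, x⟫_ℂ ≤ re ⟪T x, x⟫_ℂ ^ s := by
  refine Real.le_rpow_of_forall_le_tangent hs0 (re_inner_nonneg_left_of_nonneg hT x)
    fun ε hε => ?_
  have h := re_inner_apply_le_of_le (CFC.rpow_le_tangent hT hs0 hs1 hε) x
  rwa [re_inner_algebraMap_add_smul_apply, hx, one_pow, mul_one] at h

lemma norm_rpow_apply_sq {T : H →L[ℂ] H} (hT : 0 ≤ T) {β : ℝ} (hβ : 0 ≤ β)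
    (x : H) : ‖(T ^ β) x‖ ^ 2 = re ⟪(T ^ (2 * β)) x, x⟫_ℂ := by
  have hsq : T ^ (2 * β) = adjoint (T ^ β) ∘L T ^ β := by
    rw [← star_eq_adjoint, (IsSelfAdjoint.of_nonneg CFC.rpow_nonneg).star_eq, ← mul_def,
      ← sq, ← CFC.rpow_natCast _ 2, Nat.cast_ofNat,
      CFC.rpow_rpow_of_exponent_nonneg T β 2 hβ zero_le_two hT, mul_comm]
  rw [hsq, apply_norm_sq_eq_inner_adjoint_left]

lemma norm_rpow_apply_le {T : H →L[ℂ] H} (hT : 0 ≤ T) {β r : ℝ} (hβ : 0 ≤ β)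
    (hr : 0 < r) (hβr : 2 * β ≤ r) {x : H} (hx : ‖x‖ = 1) :
    ‖(T ^ β) x‖ ≤ re ⟪(T ^ r) x, x⟫_ℂ ^ (β / r) := by
  have hc := re_inner_nonneg_left_of_nonneg (CFC.rpow_nonneg (a := T) (y := r)) x
  have hpow : T ^ (2 * β) = (T ^ r) ^ (2 * β / r) := by
    rw [CFC.rpow_rpow_of_exponent_nonneg T r _ hr.le (by positivity) hT, mul_div_cancel₀ _ hr.ne']
  refine (pow_le_pow_iff_left₀ (norm_nonneg _) (by positivity) two_ne_zero).mp ?_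
  calc ‖(T ^ β) x‖ ^ 2 = re ⟪((T ^ r) ^ (2 * β / r)) x, x⟫_ℂ := by
        rw [norm_rpow_apply_sq hT hβ, hpow]
    _ ≤ re ⟪(T ^ r) x, x⟫_ℂ ^ (2 * β / r) :=
        re_inner_rpow_apply_le CFC.rpow_nonneg (by positivity) ((div_le_one hr).mpr hβr) hx
    _ = (re ⟪(T ^ r) x, x⟫_ℂ ^ (β / r)) ^ 2 := by
        rw [← Real.rpow_mul_natCast hc]; ring_nf

lemma norm_inner_mul_mul_apply_le {𝕜 E : Type*} [RCLike 𝕜]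
    [NormedAddCommGroup E] [InnerProductSpace 𝕜 E] [CompleteSpace E] {S : E →L[𝕜] E}
    (hS : IsSelfAdjoint S) (X T : E →L[𝕜] E) (x : E) :
    ‖⟪(S * X * T) x, x⟫_𝕜‖ ≤ ‖X‖ * ‖T x‖ * ‖S x‖ :=
  calc ‖⟪(S * X * T) x, x⟫_𝕜‖ = ‖⟪X (T x), S x⟫_𝕜‖ :=
        congrArg norm (isSelfAdjoint_iff_isSymmetric.mp hS (X (T x)) x)
    _ ≤ ‖X (T x)‖ * ‖S x‖ := norm_inner_le_norm _ _
    _ ≤ ‖X‖ * ‖T x‖ * ‖S x‖ := by gcongr; exact X.le_opNorm _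

end ContinuousLinearMap

omit [CompleteSpace H] in
lemma numRadius_nonneg (T : H →L[ℂ] H) : 0 ≤ numRadius T :=
  Real.sSup_nonneg fun _ ⟨_, _, ht⟩ => ht ▸ norm_nonneg _

omit [CompleteSpace H] in
lemma numRadius_le {T : H →L[ℂ] H} {M : ℝ} (hM : 0 ≤ M)
    (h : ∀ x : H, ‖x‖ = 1 → ‖⟪T x, x⟫_ℂ‖ ≤ M) : numRadius T ≤ M :=
  Real.sSup_le (fun _ ⟨x, hx, ht⟩ => ht ▸ h x hx) hM

open ContinuousLinearMap in
theorem norm_inner_rpow_mul_mul_rpow_le {A B : H →L[ℂ] H} (hA : 0 ≤ A) (hB : 0 ≤ B)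
    (X : H →L[ℂ] H) {α r : ℝ} (hα0 : 0 ≤ α) (hα1 : α ≤ 1) (hr : 2 ≤ r) {x : H} (hx : ‖x‖ = 1) :
    ‖⟪(A ^ α * X * B ^ (1 - α)) x, x⟫_ℂ‖ ≤ ‖X‖ * ‖α • A ^ r + (1 - α) • B ^ r‖ ^ r⁻¹ := by
  have hr0 : 0 < r := by linarith
  set a := re ⟪(A ^ r) x, x⟫_ℂ
  set b := re ⟪(B ^ r) x, x⟫_ℂ
  have ha : 0 ≤ a := re_inner_nonneg_left_of_nonneg (CFC.rpow_nonneg (a := A)) x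
  have hb : 0 ≤ b := re_inner_nonneg_left_of_nonneg (CFC.rpow_nonneg (a := B)) x
  have hmean : a ^ α * b ^ (1 - α) ≤ ‖α • A ^ r + (1 - α) • B ^ r‖ :=
    calc a ^ α * b ^ (1 - α) ≤ α * a + (1 - α) * b :=
          Real.geom_mean_le_arith_mean2_weighted hα0 (by linarith) ha hb (by ring)
      _ = re ⟪(α • A ^ r + (1 - α) • B ^ r) x, x⟫_ℂ := by
          simp only [add_apply, smul_apply, inner_add_left, map_add, ← Complex.coe_smul,
            inner_smul_left]
          simp [a, b]
      _ ≤ ‖(α • A ^ r + (1 - α) • B ^ r) x‖ * ‖x‖ := re_inner_le_norm _ _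
      _ ≤ ‖α • A ^ r + (1 - α) • B ^ r‖ := by
          simpa [hx] using (α • A ^ r + (1 - α) • B ^ r).le_opNorm x
  calc ‖⟪(A ^ α * X * B ^ (1 - α)) x, x⟫_ℂ‖ ≤ ‖X‖ * ‖(B ^ (1 - α)) x‖ * ‖(A ^ α) x‖ :=
        norm_inner_mul_mul_apply_le (IsSelfAdjoint.of_nonneg CFC.rpow_nonneg) X _ x
    _ ≤ ‖X‖ * b ^ ((1 - α) / r) * a ^ (α / r) := by
        gcongr
        · exact norm_rpow_apply_le hB (by linarith) hr0 (by linarith) hx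
        · exact norm_rpow_apply_le hA hα0 hr0 (by linarith) hx
    _ = ‖X‖ * (a ^ α * b ^ (1 - α)) ^ r⁻¹ := by
        rw [Real.mul_rpow (by positivity) (by positivity), ← Real.rpow_mul ha,
          ← Real.rpow_mul hb, div_eq_mul_inv, div_eq_mul_inv]
        ring
    _ ≤ ‖X‖ * ‖α • A ^ r + (1 - α) • B ^ r‖ ^ r⁻¹ := by gcongr

theorem statement16 (A B X : H →L[ℂ] H) (hA : 0 ≤ A) (hB : 0 ≤ B) (α r : ℝ)
    (hα0 : 0 ≤ α) (hα1 : α ≤ 1) (hr : 2 ≤ r) :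
    numRadius (A ^ α * X * B ^ (1 - α)) ^ r ≤ ‖X‖ ^ r * ‖α • A ^ r + (1 - α) • B ^ r‖ := by
  have hr0 : 0 < r := by linarith
  have hw : numRadius (A ^ α * X * B ^ (1 - α)) ≤ ‖X‖ * ‖α • A ^ r + (1 - α) • B ^ r‖ ^ r⁻¹ :=
    numRadius_le (by positivity) fun x hx =>
      norm_inner_rpow_mul_mul_rpow_le hA hB X hα0 hα1 hr hx
  calc numRadius (A ^ α * X * B ^ (1 - α)) ^ r
      ≤ (‖X‖ * ‖α • A ^ r + (1 - α) • B ^ r‖ ^ r⁻¹) ^ r := by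
        gcongr
        exact numRadius_nonneg _
    _ = ‖X‖ ^ r * ‖α • A ^ r + (1 - α) • B ^ r‖ := by
        rw [Real.mul_rpow (by positivity) (by positivity),
          Real.rpow_inv_rpow (by positivity) hr0.ne']
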